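/- Let G = (V,E) be a connected finite simple graph with n = |V|, let 𝒢 be the graph obtained from G by the subdivision-path-apex construction, and let c be a natural number. Then G contains an independent set of cardinality at least c if and only if 𝒢 contains a proper stalled subset of cardinality at least (2n+1)·|E| + c. -/

import Mathlib

/-- An empty vertex `v` is forced by the filled set `F` if some filled vertex `u ∈ F`
adjacent to `v` has `v` as its unique neighbor outside `F`. -/
def IsForced {W : Type*} (H : SimpleGraph W) (F : Set W) (v : W) : Prop :=
  v ∉ F ∧ ∃ u, u ∈ F ∧ H.Adj u v ∧ ∀ w, H.Adj u w → w ∉ F → w = v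

/-- An empty vertex `v` is skew forced by `F` if some vertex `u` (filled or not)
adjacent to `v` has `v` as its unique neighbor outside `F`. -/
def IsSkewForced {W : Type*} (H : SimpleGraph W) (F : Set W) (v : W) : Prop :=
  v ∉ F ∧ ∃ u, H.Adj u v ∧ ∀ w, H.Adj u w → w ∉ F → w = v

/-- `F` is stalled if no empty vertex is forced by `F`. -/
def Stalled {W : Type*} (H : SimpleGraph W) (F : Set W) : Prop :=
  ∀ v, ¬ IsForced H F v

/-- `F` is skew stalled if no empty vertex is skew forced by `F`. -/
def SkewStalled {W : Type*} (H : SimpleGraph W) (F : Set W) : Prop :=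
  ∀ v, ¬ IsSkewForced H F v

/-- A set of vertices is independent if its vertices are pairwise non-adjacent. -/
def IndepIn {W : Type*} (H : SimpleGraph W) (U : Set W) : Prop :=
  U.Pairwise fun a b => ¬ H.Adj a b

/-- Vertex set of the subdivision-path-apex construction: the vertices of `G`,
vertices `e^i` for each edge `e` and `0 ≤ i ≤ 2n`, and one apex vertex `ε`. -/
abbrev GVert {V : Type*} [Fintype V] (G : SimpleGraph V) : Type _ :=
  V ⊕ (G.edgeSet × Fin (2 * Fintype.card V + 1)) ⊕ Unit

/-- Generating relation: `v ~ e^0` when `v ∈ e`; `e^i ~ e^{i+1}`; `ε ~ e^0`. -/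
def gRel {V : Type*} [Fintype V] (G : SimpleGraph V) : GVert G → GVert G → Prop
  | Sum.inl v, Sum.inr (Sum.inl (e, i)) => i.val = 0 ∧ v ∈ (e : Sym2 V)
  | Sum.inr (Sum.inl (e, i)), Sum.inr (Sum.inl (e', j)) => e = e' ∧ i.val + 1 = j.val
  | Sum.inr (Sum.inr _), Sum.inr (Sum.inl (_, i)) => i.val = 0
  | _, _ => False

/-- The subdivision-path-apex construction `𝒢`. -/
def GG {V : Type*} [Fintype V] (G : SimpleGraph V) : SimpleGraph (GVert G) :=
  SimpleGraph.fromRel (gRel G)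

/-!
If `U` is independent, fill `U` and every path vertex and leave the apex `ε` empty: each `e^0`
then has two empty neighbours, `ε` and an endpoint of `e` outside `U`, and no other filled vertex
has an empty neighbour at all.

Conversely, on a path `e^0, …, e^{2n}` a filled interior vertex with one filled path neighbour
forces the other, so a stalled set containing two consecutive path vertices contains the whole
path; a path with an empty vertex therefore has at least `n` empty vertices. A stalled set of size
at least `(2n+1)|E| + 2` misses fewer than `n` vertices, so it contains every path vertex. It
cannot contain `ε`: otherwise the `e^0` of an edge `uv` would force `u` as soon as `v` is filled,
so by connectivity it would contain all of `V` or none of it. With `ε` empty, the `e^0` of an edge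
inside the filled part of `V` would force `ε`, so that part is independent. For `c ≤ 1` any single
vertex will do.
-/

open Sum

theorem SimpleGraph.Preconnected.mem_of_forall_adj_mem {V : Type*} {G : SimpleGraph V}
    (hG : G.Preconnected) {T : Set V} (hT : ∀ u w, G.Adj u w → u ∈ T → w ∈ T) {u : V}
    (hu : u ∈ T) (v : V) : v ∈ T := by
  by_contra hv
  obtain ⟨p⟩ := hG u v
  obtain ⟨d, -, hd, hd'⟩ := p.exists_boundary_dart T hu hv
  exact hd' (hT _ _ d.adj hd)

theorem IndepIn.exists_notMem_of_mem_edgeSet {V : Type*} {G : SimpleGraph V} {U : Set V}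
    (hU : IndepIn G U) {e : Sym2 V} (he : e ∈ G.edgeSet) : ∃ a ∈ e, a ∉ U := by
  induction e using Sym2.ind with
  | _ x y =>
    by_contra! h
    exact hU (h x (Sym2.mem_mk_left x y)) (h y (Sym2.mem_mk_right x y)) he.ne he

theorem Nat.forall_lt_of_consecutive {N : ℕ} {P : ℕ → Prop}
    (hup : ∀ m, m + 2 < N → P m → P (m + 1) → P (m + 2))
    (hdown : ∀ m, m + 2 < N → P (m + 1) → P (m + 2) → P m) {i : ℕ} (hiN : i + 1 < N)
    (hi : P i) (hi' : P (i + 1)) {k : ℕ} (hk : k < N) : P k := by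
  have key : ∀ k, k + 1 < N → ((P k ∧ P (k + 1)) ↔ (P 0 ∧ P 1)) := by
    intro k hk
    induction k with
    | zero => rfl
    | succ k ih =>
      rw [← ih (by omega)]
      exact ⟨fun h => ⟨hdown k hk h.1 h.2, h.1⟩, fun h => ⟨h.2, hup k hk h.1 h.2⟩⟩
  have hpair : ∀ k, k + 1 < N → P k ∧ P (k + 1) := fun k hk =>
    (key k hk).2 ((key i hiN).1 ⟨hi, hi'⟩)
  rcases k with _ | k
  · exact (hpair 0 (by omega)).1
  · exact (hpair k hk).2

theorem Fin.ncard_le_of_forall_succ_ne {m : ℕ} {A : Set (Fin (2 * m + 1))}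
    (hA : ∀ i ∈ A, ∀ j ∈ A, i.val + 1 ≠ j.val) : A.ncard ≤ m + 1 := by
  have h := Set.ncard_le_ncard_of_injOn (s := A) (t := (Set.univ : Set (Fin (m + 1))))
    (fun i => ⟨i.val / 2, by omega⟩) (fun _ _ => Set.mem_univ _) ?_ Set.finite_univ
  · simpa using h
  intro i hi j hj hij
  have hdiv : i.val / 2 = j.val / 2 := by simpa [Fin.ext_iff] using hij
  have := hA i hi j hj
  have := hA j hj i hi
  ext
  omega

namespace GG

variable {V : Type*} [Fintype V] {G : SimpleGraph V}

abbrev path (e : G.edgeSet) (i : Fin (2 * Fintype.card V + 1)) : GVert G := inr (inl (e, i))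

abbrev apex : GVert G := inr (inr ())

@[elab_as_elim]
theorem vert_cases {motive : GVert G → Prop} (vertex : ∀ v, motive (inl v))
    (path : ∀ e i, motive (path e i)) (apex : motive apex) (x : GVert G) : motive x := by
  rcases x with v | ⟨⟨e, i⟩ | ⟨⟩⟩
  exacts [vertex v, path e i, apex]

@[simp] theorem not_adj_inl_inl (u v : V) : ¬ (GG G).Adj (inl u) (inl v) := by
  simp [GG, gRel]

@[simp] theorem adj_path_inl {v : V} {e i} :
    (GG G).Adj (path e i) (inl v) ↔ i.val = 0 ∧ v ∈ (e : Sym2 V) := by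
  simp [GG, gRel]

@[simp] theorem adj_path_path {e e' : G.edgeSet} {i j} :
    (GG G).Adj (path e i) (path e' j) ↔ e = e' ∧ (i.val + 1 = j.val ∨ j.val + 1 = i.val) := by
  simp only [GG, SimpleGraph.fromRel_adj, gRel, ne_eq, inr.injEq, inl.injEq, Prod.mk.injEq]
  constructor
  · rintro ⟨-, ⟨rfl, h⟩ | ⟨rfl, h⟩⟩ <;> exact ⟨rfl, by omega⟩
  · rintro ⟨rfl, h⟩
    exact ⟨fun ⟨_, hij⟩ => by subst hij; omega, by tauto⟩

@[simp] theorem adj_path_apex {e : G.edgeSet} {i} : (GG G).Adj (path e i) apex ↔ i.val = 0 := by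
  simp [GG, gRel]

@[simp] theorem not_adj_inl_apex (v : V) : ¬ (GG G).Adj (inl v) apex := by
  simp [GG, gRel]

theorem card_gVert :
    Nat.card (GVert G) = Fintype.card V + (2 * Fintype.card V + 1) * G.edgeSet.ncard + 1 := by
  simp only [Nat.card_sum, Nat.card_prod, Nat.card_coe_set_eq, Nat.card_eq_fintype_card,
    Fintype.card_fin, Fintype.card_unit]
  ring

def withAllPaths (U : Set V) : Set (GVert G) := inl '' U ∪ Set.range (inr ∘ inl)

@[simp] theorem inl_mem_withAllPaths {U : Set V} {v : V} :
    (inl v : GVert G) ∈ withAllPaths U ↔ v ∈ U := by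
  simp [withAllPaths]

@[simp] theorem path_mem_withAllPaths (U : Set V) (e : G.edgeSet) (i) :
    path e i ∈ withAllPaths U := by
  simp [withAllPaths]

@[simp] theorem apex_notMem_withAllPaths (U : Set V) : (apex : GVert G) ∉ withAllPaths U := by
  simp [withAllPaths]

theorem ncard_withAllPaths (U : Set V) :
    (withAllPaths U : Set (GVert G)).ncard =
      U.ncard + (2 * Fintype.card V + 1) * G.edgeSet.ncard := by
  have hdisj : Disjoint (inl '' U) (Set.range (inr ∘ inl : _ → GVert G)) := by
    simp [Set.disjoint_left]
  rw [withAllPaths, Set.ncard_union_eq hdisj, Set.ncard_image_of_injective _ inl_injective,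
    Set.ncard_range_of_injective (inr_injective.comp inl_injective), Nat.card_prod,
    Nat.card_coe_set_eq, Nat.card_eq_fintype_card, Fintype.card_fin, mul_comm]

theorem stalled_withAllPaths {U : Set V} (hU : IndepIn G U) :
    Stalled (GG G) (withAllPaths U) := by
  rintro x ⟨hx, u, hu, hux, hforced⟩
  induction x using vert_cases with
  | vertex v =>
    induction u using vert_cases with
    | vertex w => exact not_adj_inl_inl w v hux
    | path e i =>
      have h0 := (adj_path_inl.1 hux).1
      exact inr_ne_inl (hforced apex (adj_path_apex.2 h0) (apex_notMem_withAllPaths U))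
    | apex => exact apex_notMem_withAllPaths U hu
  | path e i => exact hx (path_mem_withAllPaths U e i)
  | apex =>
    induction u using vert_cases with
    | vertex w => exact not_adj_inl_apex w hux
    | path e i =>
      obtain ⟨a, hae, haU⟩ := hU.exists_notMem_of_mem_edgeSet e.2
      have ha : (inl a : GVert G) ∉ withAllPaths U := by simpa using haU
      exact inl_ne_inr (hforced (inl a) (adj_path_inl.2 ⟨adj_path_apex.1 hux, hae⟩) ha)
    | apex => exact apex_notMem_withAllPaths U hu

variable {S : Set (GVert G)}

theorem path_mem_of_other_neighbors_mem (hst : Stalled (GG G) S) {e : G.edgeSet}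
    {i k : Fin (2 * Fintype.card V + 1)} (hi0 : i.val ≠ 0) (hi : path e i ∈ S)
    (hik : (GG G).Adj (path e i) (path e k))
    (hother : ∀ l, (GG G).Adj (path e i) (path e l) → l ≠ k → path e l ∈ S) :
    path e k ∈ S := by
  by_contra hk
  refine hst _ ⟨hk, _, hi, hik, fun w hw hwS => ?_⟩
  induction w using vert_cases with
  | vertex v => exact absurd (adj_path_inl.1 hw).1 hi0
  | path e' l =>
    obtain ⟨rfl, -⟩ := adj_path_path.1 hw
    by_contra hlk
    exact hwS (hother l hw fun h => hlk (h ▸ rfl))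
  | apex => exact absurd (adj_path_apex.1 hw) hi0

theorem path_mem_of_consecutive_mem (hst : Stalled (GG G) S) {e : G.edgeSet}
    {i j : Fin (2 * Fintype.card V + 1)} (hij : i.val + 1 = j.val) (hi : path e i ∈ S)
    (hj : path e j ∈ S) (k : Fin (2 * Fintype.card V + 1)) : path e k ∈ S := by
  let P : ℕ → Prop := fun m => ∀ h : m < 2 * Fintype.card V + 1, path e ⟨m, h⟩ ∈ S
  have hP : ∀ l : Fin _, P l.val ↔ path e l ∈ S := fun l => ⟨fun h => h l.isLt, fun h _ => h⟩
  have hup : ∀ m, m + 2 < 2 * Fintype.card V + 1 → P m → P (m + 1) → P (m + 2) := by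
    intro m hmN hm hm1 _
    refine path_mem_of_other_neighbors_mem hst (i := ⟨m + 1, by omega⟩) (by simp) (hm1 _)
      (by simp) fun ⟨l, hl⟩ hadj hlk => ?_
    simp only [adj_path_path, ne_eq, Fin.mk.injEq, true_and] at hadj hlk
    obtain rfl : l = m := by omega
    exact hm hl
  have hdown : ∀ m, m + 2 < 2 * Fintype.card V + 1 → P (m + 1) → P (m + 2) → P m := by
    intro m hmN hm1 hm2 h
    refine path_mem_of_other_neighbors_mem hst (i := ⟨m + 1, by omega⟩) (by simp) (hm1 _)
      (by simp) fun ⟨l, hl⟩ hadj hlk => ?_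
    simp only [adj_path_path, ne_eq, Fin.mk.injEq, true_and] at hadj hlk
    obtain rfl : l = m + 2 := by omega
    exact hm2 hl
  exact (hP k).1 (Nat.forall_lt_of_consecutive hup hdown (hij ▸ j.isLt) ((hP i).2 hi)
    (hij ▸ (hP j).2 hj) k.isLt)

theorem card_le_ncard_compl_of_path_notMem (hst : Stalled (GG G) S) {e : G.edgeSet}
    {a : Fin (2 * Fintype.card V + 1)} (ha : path e a ∉ S) : Fintype.card V ≤ Sᶜ.ncard := by
  let A : Set (Fin (2 * Fintype.card V + 1)) := {i | path e i ∈ S}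
  have hA : A.ncard ≤ Fintype.card V + 1 := Fin.ncard_le_of_forall_succ_ne
    fun i hi j hj hij => ha (path_mem_of_consecutive_mem hst hij hi hj a)
  have hAc : Aᶜ.ncard ≤ Sᶜ.ncard := Set.ncard_le_ncard_of_injOn (path e) (fun _ hi => hi)
    (fun _ _ _ _ h => by simpa using h) (Set.toFinite _)
  have hsum := Set.ncard_add_ncard_compl A
  rw [Nat.card_eq_fintype_card, Fintype.card_fin] at hsum
  omega

theorem ncard_compl_lt_card (hS : (2 * Fintype.card V + 1) * G.edgeSet.ncard + 2 ≤ S.ncard) :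
    Sᶜ.ncard < Fintype.card V := by
  have hsum := Set.ncard_add_ncard_compl S
  rw [card_gVert] at hsum
  omega

theorem path_mem_of_stalled (hst : Stalled (GG G) S)
    (hS : (2 * Fintype.card V + 1) * G.edgeSet.ncard + 2 ≤ S.ncard) (e : G.edgeSet)
    (i : Fin (2 * Fintype.card V + 1)) : path e i ∈ S := by
  by_contra h
  exact (ncard_compl_lt_card hS).not_ge (card_le_ncard_compl_of_path_notMem hst h)

theorem apex_notMem_of_stalled (hG : G.Preconnected) (hne : S ≠ Set.univ)
    (hst : Stalled (GG G) S) (hS : (2 * Fintype.card V + 1) * G.edgeSet.ncard + 2 ≤ S.ncard) :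
    apex ∉ S := by
  intro hapex
  have hpath := path_mem_of_stalled hst hS
  have hclosed : ∀ u w, G.Adj u w → u ∈ {v | inl v ∉ S} → w ∈ {v | inl v ∉ S} := by
    intro u w huw hu hw
    refine hst (inl u) ⟨hu, path ⟨s(u, w), huw⟩ ⟨0, by omega⟩, hpath _ _, by simp,
      fun x hx hxS => ?_⟩
    induction x using vert_cases with
    | vertex v =>
      rcases Sym2.mem_iff.1 (adj_path_inl.1 hx).2 with rfl | rfl
      exacts [rfl, absurd hw hxS]
    | path => exact absurd (hpath _ _) hxS
    | apex => exact absurd hapex hxS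
  by_cases hall : ∀ v : V, inl v ∈ S
  · exact hne (Set.eq_univ_of_forall (vert_cases hall hpath hapex))
  push Not at hall
  obtain ⟨v₀, hv₀⟩ := hall
  have hcard : Fintype.card V ≤ Sᶜ.ncard := by
    simpa using Set.ncard_le_ncard_of_injOn (s := Set.univ) inl
      (fun v _ => hG.mem_of_forall_adj_mem hclosed hv₀ v) inl_injective.injOn (Set.toFinite _)
  exact (ncard_compl_lt_card hS).not_ge hcard

theorem indepIn_preimage_inl (hst : Stalled (GG G) S) (hpath : ∀ e i, path e i ∈ S)
    (hapex : apex ∉ S) : IndepIn G (inl ⁻¹' S) := by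
  intro a ha b hb _ hab
  refine hst apex ⟨hapex, path ⟨s(a, b), hab⟩ ⟨0, by omega⟩, hpath _ _, by simp,
    fun x hx hxS => ?_⟩
  induction x using vert_cases with
  | vertex v =>
    rcases Sym2.mem_iff.1 (adj_path_inl.1 hx).2 with rfl | rfl
    exacts [absurd ha hxS, absurd hb hxS]
  | path => exact absurd (hpath _ _) hxS
  | apex => rfl

theorem eq_withAllPaths_preimage_inl (hpath : ∀ e i, path e i ∈ S) (hapex : apex ∉ S) :
    S = withAllPaths (inl ⁻¹' S) := by
  ext x
  induction x using vert_cases with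
  | vertex v => simp
  | path e i => simp [hpath]
  | apex => simp [hapex]

end GG

/-- `G` has an independent set of cardinality at least `c` iff `𝒢` has a
proper stalled subset of cardinality at least `(2n+1)·|E| + c`. -/
theorem indep_iff_proper_stalled {V : Type*} [Fintype V] (G : SimpleGraph V)
    (hG : G.Connected) (c : ℕ) :
    (∃ U : Set V, IndepIn G U ∧ c ≤ U.ncard) ↔
      ∃ S : Set (GVert G), S ≠ Set.univ ∧ Stalled (GG G) S ∧
        (2 * Fintype.card V + 1) * G.edgeSet.ncard + c ≤ S.ncard := by
  constructor
  · rintro ⟨U, hU, hcU⟩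
    refine ⟨GG.withAllPaths U,
      (Set.ne_univ_iff_exists_notMem _).2 ⟨GG.apex, GG.apex_notMem_withAllPaths U⟩,
      GG.stalled_withAllPaths hU, ?_⟩
    rw [GG.ncard_withAllPaths]
    omega
  · rintro ⟨S, hne, hst, hS⟩
    rcases le_or_gt c 1 with hc | hc
    · obtain ⟨v⟩ := hG.nonempty
      exact ⟨{v}, Set.pairwise_singleton _ _, by rwa [Set.ncard_singleton]⟩
    have hS2 : (2 * Fintype.card V + 1) * G.edgeSet.ncard + 2 ≤ S.ncard := by omega
    have hpath := GG.path_mem_of_stalled hst hS2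
    have hapex := GG.apex_notMem_of_stalled hG.preconnected hne hst hS2
    refine ⟨inl ⁻¹' S, GG.indepIn_preimage_inl hst hpath hapex, ?_⟩
    have hcard := congrArg Set.ncard (GG.eq_withAllPaths_preimage_inl hpath hapex)
    rw [GG.ncard_withAllPaths] at hcard
    omega
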